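/- arXiv:2108.03303 — 2 statements merged into one kernel-verified Lean document; each statement's English description precedes it below -/
import Mathlib

section
/- Let L₁ = (WithTop ℕ) × Bool with the componentwise lattice order. The maximal proper complete sublattices of L₁ are exactly the following sets: L₁ ∖ {(0, true)}, and L₁ ∖ {(n, false), (n, true)} for each natural number n ≥ 1. -/
/-- A complete sublattice of a complete lattice: a subset closed under arbitrary
infima and suprema computed in `L` (including the empty ones, so it contains `⊤` and `⊥`). -/
def IsCompleteSublattice {L : Type*} [CompleteLattice L] (S : Set L) : Prop :=
  (∀ Y : Set L, Y ⊆ S → sInf Y ∈ S) ∧ (∀ Y : Set L, Y ⊆ S → sSup Y ∈ S)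

/-- The complete sublattice generated by `X`: the intersection of all complete
sublattices containing `X`. -/
def latGen {L : Type*} [CompleteLattice L] (X : Set L) : Set L :=
  ⋂₀ {S : Set L | IsCompleteSublattice S ∧ X ⊆ S}

/-- `a` is a non-generator (w.r.t. complete-sublattice generation). -/
def IsLatNonGenerator {L : Type*} [CompleteLattice L] (a : L) : Prop :=
  ∀ X : Set L, latGen (X ∪ {a}) = Set.univ → latGen X = Set.univ

/-- A maximal proper complete sublattice. -/
def IsMaxProperSublattice {L : Type*} [CompleteLattice L] (P : Set L) : Prop :=
  IsCompleteSublattice P ∧ P ≠ Set.univ ∧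
    ∀ Q : Set L, IsCompleteSublattice Q → Q ≠ Set.univ → P ⊆ Q → P = Q

section Aux

/-- Nonempty infima in `WithTop ℕ` are attained. -/
lemma wtn_sInf_mem {S : Set (WithTop ℕ)} (hS : S.Nonempty) : sInf S ∈ S := by
  obtain ⟨a, ha, hmin⟩ := (wellFounded_lt (α := WithTop ℕ)).has_min S hS
  have : sInf S = a := le_antisymm (sInf_le ha) (le_sInf fun b hb => le_of_not_gt (hmin b hb))
  rwa [this]

lemma wtn_sInf_mem_of_ne_top {S : Set (WithTop ℕ)} (h : sInf S ≠ ⊤) : sInf S ∈ S := by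
  rcases S.eq_empty_or_nonempty with rfl | hS
  · exact absurd sInf_empty h
  · exact wtn_sInf_mem hS

/-- Suprema in `WithTop ℕ` that are neither `0` nor `⊤` are attained. -/
lemma wtn_sSup_mem {S : Set (WithTop ℕ)} (h0 : sSup S ≠ 0) (htop : sSup S ≠ ⊤) :
    sSup S ∈ S := by
  obtain ⟨n, hn⟩ : ∃ n : ℕ, sSup S = (n : WithTop ℕ) := by
    have hlt : sSup S < ⊤ := lt_top_iff_ne_top.mpr htop
    obtain ⟨k, hk, _⟩ := WithTop.lt_iff_exists_coe.mp hlt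
    exact ⟨k, by exact_mod_cast hk⟩
  have hn0 : n ≠ 0 := by
    intro h; rw [h] at hn
    exact h0 (by exact_mod_cast hn)
  by_contra hmem
  have hle : sSup S ≤ ((n - 1 : ℕ) : WithTop ℕ) := by
    apply sSup_le
    intro s hs
    have h1 : s ≤ (n : WithTop ℕ) := hn ▸ le_sSup hs
    have h2 : s ≠ (n : WithTop ℕ) := fun e => hmem (by rw [hn, ← e]; exact hs)
    obtain ⟨k, rfl, hk⟩ := WithTop.lt_iff_exists_coe.mp (lt_of_le_of_ne h1 h2)
    have hkn : (k : ℕ) < n := WithTop.coe_lt_coe.mp hk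
    exact WithTop.coe_le_coe.mpr (by omega : (k : ℕ) ≤ n - 1)
  rw [hn] at hle
  have : (n : ℕ) ≤ n - 1 := WithTop.coe_le_coe.mp hle
  omega

lemma bool_sSup_false {S : Set Bool} : sSup S = false ↔ ∀ b ∈ S, b = false := by
  constructor
  · intro h b hb
    have := le_sSup hb
    rw [h] at this
    exact le_bot_iff.mp this
  · intro h
    exact le_bot_iff.mp (sSup_le fun b hb => le_of_eq (h b hb))

lemma bool_sInf_true {S : Set Bool} : sInf S = true ↔ ∀ b ∈ S, b = true := by
  constructor
  · intro h b hb
    have := sInf_le hb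
    rw [h] at this
    exact top_le_iff.mp this
  · intro h
    exact top_le_iff.mp (le_sInf fun b hb => ge_of_eq (h b hb))

variable {L : Type*} [CompleteLattice L]

lemma cs_inf_mem {S : Set L} (h : IsCompleteSublattice S) {x y : L}
    (hx : x ∈ S) (hy : y ∈ S) : x ⊓ y ∈ S := by
  have := h.1 {x, y} (by rintro z (rfl | rfl) <;> assumption)
  rwa [sInf_pair] at this

lemma cs_sup_mem {S : Set L} (h : IsCompleteSublattice S) {x y : L}
    (hx : x ∈ S) (hy : y ∈ S) : x ⊔ y ∈ S := by
  have := h.2 {x, y} (by rintro z (rfl | rfl) <;> assumption)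
  rwa [sSup_pair] at this

lemma cs_top_mem {S : Set L} (h : IsCompleteSublattice S) : (⊤ : L) ∈ S := by
  have := h.1 ∅ (Set.empty_subset S)
  rwa [sInf_empty] at this

lemma cs_bot_mem {S : Set L} (h : IsCompleteSublattice S) : (⊥ : L) ∈ S := by
  have := h.2 ∅ (Set.empty_subset S)
  rwa [sSup_empty] at this

/-- `P₀ = L₁ \ {(0, true)}` is a complete sublattice. -/
lemma isCS_P0 : IsCompleteSublattice (Set.univ \ {((0 : WithTop ℕ), true)}) := by
  constructor
  · intro Y hY
    refine ⟨trivial, ?_⟩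
    intro hmem
    rw [Set.mem_singleton_iff] at hmem
    have h1 : sInf (Prod.fst '' Y) = (0 : WithTop ℕ) := by rw [← Prod.fst_sInf, hmem]
    have h2 : sInf (Prod.snd '' Y) = true := by rw [← Prod.snd_sInf, hmem]
    have hne : sInf (Prod.fst '' Y) ≠ ⊤ := by rw [h1]; exact (by simp)
    obtain ⟨y, hy, hy1⟩ := wtn_sInf_mem_of_ne_top hne
    have hy2 : y.2 = true := bool_sInf_true.mp h2 y.2 ⟨y, hy, rfl⟩
    rw [h1] at hy1
    exact (hY hy).2 (by rw [Set.mem_singleton_iff]; exact Prod.ext hy1 hy2)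
  · intro Y hY
    refine ⟨trivial, ?_⟩
    intro hmem
    rw [Set.mem_singleton_iff] at hmem
    have h1 : sSup (Prod.fst '' Y) = (0 : WithTop ℕ) := by rw [← Prod.fst_sSup, hmem]
    have h2 : sSup (Prod.snd '' Y) = true := by rw [← Prod.snd_sSup, hmem]
    have hex : ∃ y ∈ Y, y.2 = true := by
      by_contra hc
      push_neg at hc
      have : sSup (Prod.snd '' Y) = false := by
        apply bool_sSup_false.mpr
        rintro b ⟨y, hy, rfl⟩
        simpa using hc y hy
      rw [this] at h2
      exact Bool.false_ne_true h2
    obtain ⟨y, hy, hy2⟩ := hex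
    have hle : y.1 ≤ (0 : WithTop ℕ) := by
      rw [← h1]
      exact le_sSup ⟨y, hy, rfl⟩
    have hy1 : y.1 = (0 : WithTop ℕ) := le_antisymm hle (by simp)
    exact (hY hy).2 (by rw [Set.mem_singleton_iff]; exact Prod.ext hy1 hy2)

/-- `Pₙ = L₁ \ {(n, false), (n, true)}` is a complete sublattice for `n ≥ 1`. -/
lemma isCS_Pn (n : ℕ) (hn : 1 ≤ n) :
    IsCompleteSublattice
      (Set.univ \ {(((n : ℕ) : WithTop ℕ), false), (((n : ℕ) : WithTop ℕ), true)}) := by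
  have key : ∀ y : WithTop ℕ × Bool, y.1 = ((n : ℕ) : WithTop ℕ) →
      y ∈ ({(((n : ℕ) : WithTop ℕ), false), (((n : ℕ) : WithTop ℕ), true)} :
        Set (WithTop ℕ × Bool)) := by
    intro y hy1
    cases hc : y.2 with
    | false => exact Set.mem_insert_iff.mpr (Or.inl (Prod.ext hy1 hc))
    | true => exact Set.mem_insert_iff.mpr (Or.inr (Prod.ext hy1 hc))
  constructor
  · intro Y hY
    refine ⟨trivial, ?_⟩
    intro hmem
    have h1 : sInf (Prod.fst '' Y) = ((n : ℕ) : WithTop ℕ) := by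
      rw [← Prod.fst_sInf]
      rcases Set.mem_insert_iff.mp hmem with h | h
      · rw [h]
      · rw [Set.mem_singleton_iff] at h; rw [h]
    have hne : sInf (Prod.fst '' Y) ≠ ⊤ := by rw [h1]; exact WithTop.coe_ne_top
    obtain ⟨y, hy, hy1⟩ := wtn_sInf_mem_of_ne_top hne
    rw [h1] at hy1
    exact (hY hy).2 (key y hy1)
  · intro Y hY
    refine ⟨trivial, ?_⟩
    intro hmem
    have h1 : sSup (Prod.fst '' Y) = ((n : ℕ) : WithTop ℕ) := by
      rw [← Prod.fst_sSup]
      rcases Set.mem_insert_iff.mp hmem with h | h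
      · rw [h]
      · rw [Set.mem_singleton_iff] at h; rw [h]
    have h0 : sSup (Prod.fst '' Y) ≠ 0 := by
      rw [h1]
      intro h
      have : n = 0 := by exact_mod_cast h
      omega
    have htop : sSup (Prod.fst '' Y) ≠ ⊤ := by rw [h1]; exact WithTop.coe_ne_top
    have := wtn_sSup_mem h0 htop
    rw [h1] at this
    obtain ⟨y, hy, hy1⟩ := this
    exact (hY hy).2 (key y hy1)

/-- `Qₘ = {p | p.2 = true ∨ p.1 ≤ m}` is a complete sublattice. -/
lemma isCS_Q (m : ℕ) :
    IsCompleteSublattice {p : WithTop ℕ × Bool | p.2 = true ∨ p.1 ≤ ((m : ℕ) : WithTop ℕ)} := by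
  constructor
  · intro Y hY
    by_cases h2 : (sInf Y).2 = true
    · exact Or.inl h2
    right
    have hex : ∃ y ∈ Y, y.2 = false := by
      by_contra hc
      push_neg at hc
      apply h2
      rw [Prod.snd_sInf]
      apply bool_sInf_true.mpr
      rintro b ⟨y, hy, rfl⟩
      simpa using hc y hy
    obtain ⟨y, hy, hy2⟩ := hex
    have h1 : (sInf Y).1 ≤ y.1 := by
      rw [Prod.fst_sInf]
      exact sInf_le ⟨y, hy, rfl⟩
    rcases hY hy with ht | hle
    · rw [hy2] at ht; exact absurd ht Bool.false_ne_true
    · exact h1.trans hle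
  · intro Y hY
    by_cases h2 : (sSup Y).2 = true
    · exact Or.inl h2
    right
    have hall : ∀ y ∈ Y, y.1 ≤ ((m : ℕ) : WithTop ℕ) := by
      intro y hy
      rcases hY hy with ht | hle
      · exfalso
        apply h2
        apply top_le_iff.mp
        rw [Prod.snd_sSup]
        calc (⊤ : Bool) = y.2 := ht.symm
          _ ≤ sSup (Prod.snd '' Y) := le_sSup ⟨y, hy, rfl⟩
      · exact hle
    rw [Prod.fst_sSup]
    apply sSup_le
    rintro a ⟨y, hy, rfl⟩
    exact hall y hy

end Aux

/-- The maximal proper complete sublattices of `L₁ = (WithTop ℕ) × Bool` are exactly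
`L₁ \ {(0, true)}` and `L₁ \ {(n, false), (n, true)}` for `n ≥ 1`. -/
theorem maxProper_L1_classification :
    ∀ P : Set (WithTop ℕ × Bool),
      IsMaxProperSublattice P ↔
        (P = Set.univ \ {((0 : WithTop ℕ), true)} ∨
          ∃ n : ℕ, 1 ≤ n ∧
            P = Set.univ \ {(((n : ℕ) : WithTop ℕ), false), (((n : ℕ) : WithTop ℕ), true)}) := by
  intro P
  constructor
  · intro hP
    by_cases h0 : ((0 : WithTop ℕ), true) ∈ P
    · by_cases hmiss : ∃ n : ℕ, 1 ≤ n ∧ (((n : ℕ) : WithTop ℕ), false) ∉ P ∧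
          (((n : ℕ) : WithTop ℕ), true) ∉ P
      · obtain ⟨n, hn, hf, ht⟩ := hmiss
        right
        refine ⟨n, hn, ?_⟩
        apply hP.2.2 _ (isCS_Pn n hn)
        · intro h
          have : (((n : ℕ) : WithTop ℕ), false) ∈
              (Set.univ \ {(((n : ℕ) : WithTop ℕ), false), (((n : ℕ) : WithTop ℕ), true)}) := by
            rw [h]; trivial
          exact this.2 (Set.mem_insert _ _)
        · intro p hp
          refine ⟨trivial, ?_⟩
          intro hmem
          rcases Set.mem_insert_iff.mp hmem with h | h
          · exact hf (h ▸ hp)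
          · rw [Set.mem_singleton_iff] at h; exact ht (h ▸ hp)
      · -- impossible case: P would not be maximal
        exfalso
        push_neg at hmiss
        -- every (a, true) is in P
        have hT : ∀ a : WithTop ℕ, (a, true) ∈ P := by
          intro a
          induction a using WithTop.recTopCoe with
          | top =>
            have := cs_top_mem hP.1
            exact this
          | coe k =>
            rcases Nat.eq_zero_or_pos k with rfl | hk
            · exact_mod_cast h0
            rcases Classical.em ((((k : ℕ) : WithTop ℕ), false) ∈ P) with hf | hf
            · have hsup := cs_sup_mem hP.1 hf h0
              have heq : (((k : ℕ) : WithTop ℕ), false) ⊔ ((0 : WithTop ℕ), true)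
                  = (((k : ℕ) : WithTop ℕ), true) := by
                apply Prod.ext
                · simp
                · rfl
              rwa [heq] at hsup
            · exact hmiss k hk hf
        -- downward closure of the "false" part
        have hdc : ∀ a c : WithTop ℕ, (a, false) ∈ P → c ≤ a → (c, false) ∈ P := by
          intro a c ha hca
          have hinf := cs_inf_mem hP.1 ha (hT c)
          have heq : (a, false) ⊓ (c, true) = (c, false) := by
            apply Prod.ext
            · exact inf_eq_right.mpr hca
            · rfl
          rwa [heq] at hinf
        have hnotop : ((⊤ : WithTop ℕ), false) ∉ P := by
          intro htop
          apply hP.2.1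
          apply Set.eq_univ_of_forall
          rintro ⟨a, b⟩
          cases b with
          | false => exact hdc ⊤ a htop le_top
          | true => exact hT a
        have hm : ∃ m : ℕ, (((m : ℕ) : WithTop ℕ), false) ∉ P := by
          by_contra hc
          push_neg at hc
          apply hnotop
          have hsub : Set.range (fun k : ℕ => (((k : ℕ) : WithTop ℕ), false)) ⊆ P := by
            rintro p ⟨k, rfl⟩
            exact hc k
          have hmem := hP.1.2 _ hsub
          have heq : sSup (Set.range (fun k : ℕ => (((k : ℕ) : WithTop ℕ), false)))
              = ((⊤ : WithTop ℕ), false) := by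
            apply Prod.ext
            · rw [Prod.fst_sSup, ← Set.range_comp]
              rw [sSup_eq_top]
              intro b hb
              obtain ⟨k, rfl, _⟩ := WithTop.lt_iff_exists_coe.mp hb
              exact ⟨((k + 1 : ℕ) : WithTop ℕ), ⟨k + 1, rfl⟩,
                WithTop.coe_lt_coe.mpr (Nat.lt_succ_self k)⟩
            · rw [Prod.snd_sSup, ← Set.range_comp]
              apply bool_sSup_false.mpr
              rintro b ⟨k, rfl⟩
              rfl
          rwa [heq] at hmem
        obtain ⟨m, hmP⟩ := hm
        have hPQ : P ⊆ {p : WithTop ℕ × Bool | p.2 = true ∨ p.1 ≤ ((m : ℕ) : WithTop ℕ)} := by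
          rintro ⟨a, b⟩ hp
          cases b with
          | true => exact Or.inl rfl
          | false =>
            right
            by_contra hle
            exact hmP (hdc a _ hp (le_of_not_ge hle))
        have hQproper : {p : WithTop ℕ × Bool | p.2 = true ∨ p.1 ≤ ((m : ℕ) : WithTop ℕ)}
            ≠ Set.univ := by
          intro h
          have : (((m + 1 : ℕ) : WithTop ℕ), false) ∈
              {p : WithTop ℕ × Bool | p.2 = true ∨ p.1 ≤ ((m : ℕ) : WithTop ℕ)} := by
            rw [h]; trivial
          rcases this with ht | hle
          · exact Bool.false_ne_true ht
          · have : (m + 1 : ℕ) ≤ m := WithTop.coe_le_coe.mp hle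
            omega
        have hPeq := hP.2.2 _ (isCS_Q m) hQproper hPQ
        apply hmP
        rw [hPeq]
        exact Or.inr le_rfl
    · left
      apply hP.2.2 _ isCS_P0
      · intro h
        have : ((0 : WithTop ℕ), true) ∈ Set.univ \ {((0 : WithTop ℕ), true)} := by
          rw [h]; trivial
        exact this.2 rfl
      · intro p hp
        refine ⟨trivial, ?_⟩
        intro hmem
        rw [Set.mem_singleton_iff] at hmem
        exact h0 (hmem ▸ hp)
  · rintro (rfl | ⟨n, hn, rfl⟩)
    · refine ⟨isCS_P0, ?_, ?_⟩
      · intro h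
        have : ((0 : WithTop ℕ), true) ∈ Set.univ \ {((0 : WithTop ℕ), true)} := by
          rw [h]; trivial
        exact this.2 rfl
      · intro Q hQ hQne hsub
        have hQuniv : ((0 : WithTop ℕ), true) ∈ Q → Q = Set.univ := by
          intro hq
          apply Set.eq_univ_of_forall
          intro x
          by_cases hx : x = ((0 : WithTop ℕ), true)
          · exact hx ▸ hq
          · exact hsub ⟨trivial, hx⟩
        apply Set.Subset.antisymm hsub
        intro q hq
        refine ⟨trivial, ?_⟩
        intro hmem
        rw [Set.mem_singleton_iff] at hmem
        exact hQne (hQuniv (hmem ▸ hq))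
    · refine ⟨isCS_Pn n hn, ?_, ?_⟩
      · intro h
        have : (((n : ℕ) : WithTop ℕ), false) ∈
            Set.univ \ {(((n : ℕ) : WithTop ℕ), false), (((n : ℕ) : WithTop ℕ), true)} := by
          rw [h]; trivial
        exact this.2 (Set.mem_insert _ _)
      · intro Q hQ hQne hsub
        -- (0, true) and (⊤, false) are in Pₙ hence in Q
        have h0Q : ((0 : WithTop ℕ), true) ∈ Q := by
          apply hsub
          refine ⟨trivial, ?_⟩
          intro hmem
          rcases Set.mem_insert_iff.mp hmem with h | h
          · exact Bool.false_ne_true (congrArg Prod.snd h).symm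
          · rw [Set.mem_singleton_iff] at h
            have h1 : (0 : WithTop ℕ) = ((n : ℕ) : WithTop ℕ) := congrArg Prod.fst h
            have : (0 : ℕ) = n := by exact_mod_cast h1
            omega
        have htQ : ((⊤ : WithTop ℕ), false) ∈ Q := by
          apply hsub
          refine ⟨trivial, ?_⟩
          intro hmem
          rcases Set.mem_insert_iff.mp hmem with h | h
          · exact WithTop.coe_ne_top (congrArg Prod.fst h).symm
          · rw [Set.mem_singleton_iff] at h
            exact WithTop.coe_ne_top (congrArg Prod.fst h).symm
        have hpair : ((((n : ℕ) : WithTop ℕ), false) ∈ Q ∨ (((n : ℕ) : WithTop ℕ), true) ∈ Q)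
            → Q = Set.univ := by
          intro hq
          have hboth : (((n : ℕ) : WithTop ℕ), false) ∈ Q ∧ (((n : ℕ) : WithTop ℕ), true) ∈ Q := by
            rcases hq with hf | ht
            · refine ⟨hf, ?_⟩
              have hsup := cs_sup_mem hQ hf h0Q
              have heq : (((n : ℕ) : WithTop ℕ), false) ⊔ ((0 : WithTop ℕ), true)
                  = (((n : ℕ) : WithTop ℕ), true) := by
                apply Prod.ext
                · simp
                · rfl
              rwa [heq] at hsup
            · refine ⟨?_, ht⟩
              have hinf := cs_inf_mem hQ ht htQ
              have heq : (((n : ℕ) : WithTop ℕ), true) ⊓ ((⊤ : WithTop ℕ), false)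
                  = (((n : ℕ) : WithTop ℕ), false) := by
                apply Prod.ext
                · simp
                · rfl
              rwa [heq] at hinf
          apply Set.eq_univ_of_forall
          intro x
          by_cases hx : x ∈ ({(((n : ℕ) : WithTop ℕ), false), (((n : ℕ) : WithTop ℕ), true)} :
              Set (WithTop ℕ × Bool))
          · rcases Set.mem_insert_iff.mp hx with h | h
            · exact h ▸ hboth.1
            · rw [Set.mem_singleton_iff] at h
              exact h ▸ hboth.2
          · exact hsub ⟨trivial, hx⟩
        apply Set.Subset.antisymm hsub
        intro q hq
        refine ⟨trivial, ?_⟩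
        intro hmem
        apply hQne
        apply hpair
        rcases Set.mem_insert_iff.mp hmem with h | h
        · exact Or.inl (h ▸ hq)
        · rw [Set.mem_singleton_iff] at h
          exact Or.inr (h ▸ hq)
end

section
/- Let K = WithTop (ℕ ×ₗ ℕ) and L₂ = K × Bool with the componentwise lattice order. For every natural number n ≥ 1, the element ((n, 0), false) of L₂ is a non-generator with respect to complete-sublattice generation. -/
/-- `ℕ ×ₗ ℕ` is a well-order, hence conditionally complete with bottom;
this makes `WithTop (ℕ ×ₗ ℕ)` a complete lattice of order type `ω² + 1`. -/
noncomputable instance : ConditionallyCompleteLinearOrderBot (ℕ ×ₗ ℕ) :=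
  WellFoundedLT.conditionallyCompleteLinearOrderBot _

section aux
variable {L : Type*} [CompleteLattice L]

lemma subset_latGen (X : Set L) : X ⊆ latGen X :=
  fun x hx => Set.mem_sInter.2 fun _ hS => hS.2 hx

lemma latGen_isCS (X : Set L) : IsCompleteSublattice (latGen X) := by
  constructor <;> intro Y hY <;> refine Set.mem_sInter.2 fun S hS => ?_
  · exact hS.1.1 Y fun y hy => (Set.mem_sInter.1 (hY hy)) S hS
  · exact hS.1.2 Y fun y hy => (Set.mem_sInter.1 (hY hy)) S hS

lemma latGen_subset {X S : Set L} (hS : IsCompleteSublattice S) (hX : X ⊆ S) :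
    latGen X ⊆ S := Set.sInter_subset_of_mem ⟨hS, hX⟩

lemma cs_top {S : Set L} (hS : IsCompleteSublattice S) : (⊤ : L) ∈ S := by
  simpa using hS.1 ∅ (Set.empty_subset S)

lemma cs_bot {S : Set L} (hS : IsCompleteSublattice S) : (⊥ : L) ∈ S := by
  simpa using hS.2 ∅ (Set.empty_subset S)

lemma cs_inf {S : Set L} (hS : IsCompleteSublattice S) {p q : L} (hp : p ∈ S) (hq : q ∈ S) :
    p ⊓ q ∈ S := by
  simpa [sInf_pair] using hS.1 {p, q} (by rintro r (rfl | rfl) <;> assumption)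

lemma cs_sup {S : Set L} (hS : IsCompleteSublattice S) {p q : L} (hp : p ∈ S) (hq : q ∈ S) :
    p ⊔ q ∈ S := by
  simpa [sSup_pair] using hS.2 {p, q} (by rintro r (rfl | rfl) <;> assumption)

lemma cs_iInf {ι : Sort*} {S : Set L} (hS : IsCompleteSublattice S) {f : ι → L}
    (hf : ∀ i, f i ∈ S) : (⨅ i, f i) ∈ S := by
  rw [iInf]; exact hS.1 _ (by rintro _ ⟨i, rfl⟩; exact hf i)

lemma cs_iSup {ι : Sort*} {S : Set L} (hS : IsCompleteSublattice S) {f : ι → L}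
    (hf : ∀ i, f i ∈ S) : (⨆ i, f i) ∈ S := by
  rw [iSup]; exact hS.2 _ (by rintro _ ⟨i, rfl⟩; exact hf i)

end aux

section frame
variable {L : Type*} [CompleteDistribLattice L]

lemma T_isCS {S : Set L} (hS : IsCompleteSublattice S) (a : L) :
    IsCompleteSublattice {c : L | ∃ s ∈ S, ∃ t ∈ S, c = t ⊓ (a ⊔ s)} := by
  constructor
  · intro Y hY
    choose s hs t ht heq using fun y : Y => hY y.2
    refine ⟨⨅ y, s y, cs_iInf hS hs, ⨅ y, t y, cs_iInf hS ht, ?_⟩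
    rw [sInf_eq_iInf']
    calc ⨅ y : Y, (y : L) = ⨅ y : Y, (t y ⊓ (a ⊔ s y)) := iInf_congr heq
      _ = (⨅ y, t y) ⊓ ⨅ y, (a ⊔ s y) := iInf_inf_eq
      _ = (⨅ y, t y) ⊓ (a ⊔ ⨅ y, s y) := by rw [sup_iInf_eq]
  · intro Y hY
    choose s hs t ht heq using fun y : Y => hY y.2
    refine ⟨⨆ y, (t y ⊓ s y), cs_iSup hS fun y => cs_inf hS (ht y) (hs y),
      (⨆ y, t y) ⊔ ⨆ y, (t y ⊓ s y),
      cs_sup hS (cs_iSup hS ht) (cs_iSup hS fun y => cs_inf hS (ht y) (hs y)), ?_⟩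
    rw [sSup_eq_iSup']
    calc ⨆ y : Y, (y : L) = ⨆ y : Y, (t y ⊓ (a ⊔ s y)) := iSup_congr heq
      _ = ⨆ y : Y, ((t y ⊓ a) ⊔ (t y ⊓ s y)) := by simp_rw [inf_sup_left]
      _ = (⨆ y, (t y ⊓ a)) ⊔ ⨆ y, (t y ⊓ s y) := iSup_sup_eq
      _ = ((⨆ y, t y) ⊓ a) ⊔ ⨆ y, (t y ⊓ s y) := by rw [iSup_inf_eq]
      _ = ((⨆ y, t y) ⊔ ⨆ y, (t y ⊓ s y)) ⊓ (a ⊔ ⨆ y, (t y ⊓ s y)) := sup_inf_right _ _ _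
end frame

/-- In `L₂ = (WithTop (ℕ ×ₗ ℕ)) × Bool`, for every `n ≥ 1` the element `((n, 0), false)`
is a non-generator. -/
theorem nonGenerator_n0_false_L2 :
    ∀ n : ℕ, 1 ≤ n →
      IsLatNonGenerator (((toLex (n, 0) : ℕ ×ₗ ℕ) : WithTop (ℕ ×ₗ ℕ)), false) := by
  intro n hn X hX
  set α : WithTop (ℕ ×ₗ ℕ) := ((toLex (n, 0) : ℕ ×ₗ ℕ) : WithTop (ℕ ×ₗ ℕ)) with hαdef
  set a : WithTop (ℕ ×ₗ ℕ) × Bool := (α, false) with hadef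
  set S := latGen X with hSdef
  have hScs : IsCompleteSublattice S := latGen_isCS X
  have hTcs : IsCompleteSublattice
      {c : WithTop (ℕ ×ₗ ℕ) × Bool | ∃ s ∈ S, ∃ t ∈ S, c = t ⊓ (a ⊔ s)} := T_isCS hScs a
  have hXT : X ∪ {a} ⊆ {c | ∃ s ∈ S, ∃ t ∈ S, c = t ⊓ (a ⊔ s)} := by
    rintro c (hc | rfl)
    · exact ⟨⊤, cs_top hScs, c, subset_latGen X hc, by simp⟩
    · exact ⟨⊥, cs_bot hScs, ⊤, cs_top hScs, by simp⟩
  have hTuniv : ∀ c : WithTop (ℕ ×ₗ ℕ) × Bool, ∃ s ∈ S, ∃ t ∈ S, c = t ⊓ (a ⊔ s) := by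
    intro c
    exact latGen_subset hTcs hXT (hX ▸ Set.mem_univ c : c ∈ latGen (X ∪ {a}))
  -- Step A: (x, true) ∈ S for every x ≠ α
  have hA : ∀ x : WithTop (ℕ ×ₗ ℕ), x ≠ α → (x, true) ∈ S := by
    intro x hxα
    obtain ⟨s, hs, t, ht, heq⟩ := hTuniv (x, true)
    have h1 : x = t.1 ⊓ (α ⊔ s.1) := congrArg Prod.fst heq
    have h2 : true = t.2 ⊓ (false ⊔ s.2) := congrArg Prod.snd heq
    have hb : t.2 = true ∧ s.2 = true :=
      (show ∀ b c : Bool, true = b ⊓ (false ⊔ c) → b = true ∧ c = true by decide) t.2 s.2 h2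
    rcases le_total t.1 (α ⊔ s.1) with h | h
    · have hx : t.1 = x := by rw [h1, inf_eq_left.2 h]
      have : t = (x, true) := Prod.ext_iff.2 ⟨hx, hb.1⟩
      exact this ▸ ht
    · have hx : α ⊔ s.1 = x := by rw [h1, inf_eq_right.2 h]
      rcases le_total α s.1 with h' | h'
      · have hsx : s.1 = x := by rw [← hx, sup_eq_right.2 h']
        have : s = (x, true) := Prod.ext_iff.2 ⟨hsx, hb.2⟩
        exact this ▸ hs
      · exact absurd (by rw [← hx, sup_eq_left.2 h']) (Ne.symm hxα)
  -- Step B: (α, true) ∈ S since α is the sup of the column below it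
  have hB : (α, true) ∈ S := by
    have hlub : IsLUB (Set.range fun k : ℕ =>
        ((toLex (n - 1, k) : ℕ ×ₗ ℕ) : WithTop (ℕ ×ₗ ℕ))) α := by
      constructor
      · rintro _ ⟨k, rfl⟩
        rw [hαdef, WithTop.coe_le_coe, Prod.Lex.le_iff]
        left; simp only [ofLex_toLex]; omega
      · intro b hb
        induction b using WithTop.recTopCoe with
        | top => exact le_top
        | coe q =>
          obtain ⟨i, j⟩ := q
          have h1 := hb (Set.mem_range_self (j + 1))
          rw [show ((i, j) : ℕ ×ₗ ℕ) = toLex (i, j) from rfl, WithTop.coe_le_coe,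
            Prod.Lex.le_iff] at h1
          rw [hαdef, show ((i, j) : ℕ ×ₗ ℕ) = toLex (i, j) from rfl, WithTop.coe_le_coe,
            Prod.Lex.le_iff]
          rcases h1 with h1 | ⟨h1, h1'⟩
          · simp only [ofLex_toLex] at *; omega
          · simp only [ofLex_toLex] at *; omega
    have key : (α, true) = ⨆ k : ℕ,
        (((toLex (n - 1, k) : ℕ ×ₗ ℕ) : WithTop (ℕ ×ₗ ℕ)), (true : Bool)) := by
      refine Prod.ext_iff.2 ⟨?_, ?_⟩
      · rw [Prod.fst_iSup]
        exact (hlub.iSup_eq).symm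
      · rw [Prod.snd_iSup]
        simp
    rw [key]
    refine cs_iSup hScs fun k => hA _ ?_
    rw [hαdef]
    intro hcontra
    rw [WithTop.coe_inj] at hcontra
    have := Prod.Lex.le_iff (x := toLex ((n : ℕ), (0 : ℕ))) (y := toLex (n - 1, k))
    have h2 : toLex ((n : ℕ), (0 : ℕ)) ≤ toLex (n - 1, k) := le_of_eq hcontra.symm
    rw [Prod.Lex.le_iff] at h2
    simp only [ofLex_toLex] at h2
    omega
  have hAll : ∀ x : WithTop (ℕ ×ₗ ℕ), (x, true) ∈ S := by
    intro x
    by_cases h : x = α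
    · exact h ▸ hB
    · exact hA x h
  -- Step C: (⊤, false) ∈ S
  have hC : ((⊤ : WithTop (ℕ ×ₗ ℕ)), false) ∈ S := by
    obtain ⟨s, hs, t, ht, heq⟩ := hTuniv (⊤, false)
    have h1 : (⊤ : WithTop (ℕ ×ₗ ℕ)) = t.1 ⊓ (α ⊔ s.1) := congrArg Prod.fst heq
    have h2 : false = t.2 ⊓ (false ⊔ s.2) := congrArg Prod.snd heq
    have ht1 : t.1 = ⊤ := top_unique (by rw [h1]; exact inf_le_left)
    have hsup : α ⊔ s.1 = ⊤ := top_unique (by rw [h1]; exact inf_le_right)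
    have hs1 : s.1 = ⊤ := by
      rcases le_total α s.1 with h | h
      · rw [← hsup, sup_eq_right.2 h]
      · exact absurd (by rw [← hsup, sup_eq_left.2 h]) (WithTop.coe_ne_top (a := toLex (n, 0)))
    have hb : t.2 = false ∨ s.2 = false :=
      (show ∀ b c : Bool, false = b ⊓ (false ⊔ c) → b = false ∨ c = false by decide) t.2 s.2 h2
    rcases hb with hb | hb
    · have : t = (⊤, false) := Prod.ext_iff.2 ⟨ht1, hb⟩
      exact this ▸ ht
    · have : s = (⊤, false) := Prod.ext_iff.2 ⟨hs1, hb⟩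
      exact this ▸ hs
  -- conclusion
  refine Set.eq_univ_of_forall ?_
  rintro ⟨x, b⟩
  cases b
  · have hxf : ((x : WithTop (ℕ ×ₗ ℕ)), false) = (x, true) ⊓ (⊤, false) :=
      Prod.ext_iff.2 ⟨by simp, show (false : Bool) = true ⊓ false by decide⟩
    exact hxf ▸ cs_inf hScs (hAll x) hC
  · exact hAll x
end
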